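/- Let $X$ be a Banach space and $S(t,s) : X \to X$ an evolution process with a pullback absorbing family $\hat B_0 = \{B_0(s)\}_{s \in \mathbb{R}}$. Suppose for any $t \in \mathbb{R}$ and $\epsilon > 0$ there exists $s_\epsilon < t$ and a contractive function $\psi_\epsilon : B_0(s_\epsilon) \times B_0(s_\epsilon) \to \mathbb{R}$ such that $\|S(t,s_\epsilon)x - S(t,s_\epsilon)y\|_X \le \epsilon + \psi_\epsilon(x,y)$ for all $x, y \in B_0(s_\epsilon)$. Then the process is pullback asymptotically compact. -/
import Mathlib


open Filter Bornology

/-- An evolution process on a normed space `X`. -/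
structure EvolProcess (X : Type*) [NormedAddCommGroup X] where
  S : ℝ → ℝ → X → X
  idem : ∀ t x, S t t x = x
  comp : ∀ t τ s, s ≤ τ → τ ≤ t → ∀ x, S t s x = S t τ (S τ s x)
  cont : ∀ t s, Continuous (S t s)

/-- A process is pullback asymptotically compact. -/
def PullbackAsympCompact {X : Type*} [NormedAddCommGroup X] (P : EvolProcess X) : Prop :=
  ∀ (t : ℝ) (s : ℕ → ℝ) (x : ℕ → X), (∀ k, s k ≤ t) →
    Tendsto s atTop atBot → IsBounded (Set.range x) →
    ∃ (y : X) (φ : ℕ → ℕ), StrictMono φ ∧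
      Tendsto (fun k => P.S t (s (φ k)) (x (φ k))) atTop (nhds y)

/-- Definition 4.2: `ψ` is a contractive function on `B × B`. -/
def IsContractiveOn {X : Type*} [NormedAddCommGroup X]
    (ψ : X → X → ℝ) (B : Set X) : Prop :=
  ∀ x : ℕ → X, (∀ n, x n ∈ B) →
    ∃ φ : ℕ → ℕ, StrictMono φ ∧
      ∃ L : ℕ → ℝ,
        (∀ k, Tendsto (fun l => ψ (x (φ k)) (x (φ l))) atTop (nhds (L k))) ∧
        Tendsto L atTop (nhds 0)


private lemma exists_cauchy_subseq {X : Type*} [NormedAddCommGroup X]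
    (y : ℕ → X)
    (H : ∀ ε : ℝ, 0 < ε → ∀ σ : ℕ → ℕ, StrictMono σ →
      ∃ φ : ℕ → ℕ, StrictMono φ ∧ ∀ k l, ‖y (σ (φ k)) - y (σ (φ l))‖ ≤ ε) :
    ∃ φ : ℕ → ℕ, StrictMono φ ∧ CauchySeq (fun k => y (φ k)) := by
  have H' : ∀ (n : ℕ) (p : {σ : ℕ → ℕ // StrictMono σ}),
      ∃ q : {σ : ℕ → ℕ // StrictMono σ},
        (∃ φ : ℕ → ℕ, StrictMono φ ∧ q.1 = p.1 ∘ φ) ∧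
        ∀ k l, ‖y (q.1 k) - y (q.1 l)‖ ≤ 1/(n+1) := by
    intro n p
    obtain ⟨φ, hφ, hb⟩ := H (1/(n+1)) (by positivity) p.1 p.2
    exact ⟨⟨p.1 ∘ φ, p.2.comp hφ⟩, ⟨φ, hφ, rfl⟩, hb⟩
  choose F hF1 hF2 using H'
  set G : ℕ → {σ : ℕ → ℕ // StrictMono σ} :=
    fun n => Nat.rec (F 0 ⟨id, strictMono_id⟩) (fun n ih => F (n+1) ih) n with hG
  have hGsucc : ∀ n, G (n+1) = F (n+1) (G n) := fun n => rfl
  have hGb : ∀ n k l, ‖y ((G n).1 k) - y ((G n).1 l)‖ ≤ 1/(n+1) := by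
    intro n
    cases n with
    | zero => exact hF2 0 _
    | succ m => rw [hGsucc]; exact hF2 (m+1) _
  have hnest : ∀ n p, ∃ τ : ℕ → ℕ, (∀ k, k ≤ τ k) ∧ (G (n+p)).1 = (G n).1 ∘ τ := by
    intro n p
    induction p with
    | zero => exact ⟨id, fun k => le_rfl, rfl⟩
    | succ p ih =>
      obtain ⟨τ, hτ, hτe⟩ := ih
      obtain ⟨φ, hφ, hφe⟩ := hF1 (n+p+1) (G (n+p))
      refine ⟨τ ∘ φ, fun k => le_trans hφ.le_apply (hτ (φ k)), ?_⟩
      show (G (n+p+1)).1 = _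
      rw [hGsucc, hφe, hτe]
      rfl
  set D : ℕ → ℕ := fun n => (G n).1 n with hD
  have hDmono : StrictMono D := by
    apply strictMono_nat_of_lt_succ
    intro n
    obtain ⟨τ, hτ, hτe⟩ := hnest n 1
    have h1 : D (n+1) = (G n).1 (τ (n+1)) := by
      simp only [hD]
      rw [show G (n+1) = G (n+1) from rfl, show (G (n+1)).1 = (G n).1 ∘ τ from hτe]
      rfl
    rw [h1]
    exact (G n).2 (lt_of_lt_of_le (Nat.lt_succ_self n) (hτ (n+1)))
  refine ⟨D, hDmono, ?_⟩
  rw [Metric.cauchySeq_iff']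
  intro ε hε
  obtain ⟨N, hN⟩ := exists_nat_one_div_lt hε
  refine ⟨N, fun n hn => ?_⟩
  obtain ⟨p, rfl⟩ := Nat.exists_eq_add_of_le hn
  obtain ⟨τ, hτ, hτe⟩ := hnest N p
  have h1 : D (N+p) = (G N).1 (τ (N+p)) := by
    simp only [hD]
    rw [show (G (N+p)).1 = (G N).1 ∘ τ from hτe]
    rfl
  have h2 : D N = (G N).1 N := rfl
  rw [dist_eq_norm, h1, h2]
  exact lt_of_le_of_lt (hGb N _ _) hN

/-- Theorem 4.3 (Chueshov–Lasiecka-type compactness criterion). -/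
theorem contractive_criterion_asymp_compact
    {X : Type*} [NormedAddCommGroup X] [NormedSpace ℝ X] [CompleteSpace X]
    (P : EvolProcess X) (B₀ : ℝ → Set X)
    (hB₀bdd : ∀ s, IsBounded (B₀ s))
    (habs : ∀ t : ℝ, ∀ D : Set X, IsBounded D →
      ∃ s₀ ≤ t, ∀ s ≤ s₀, P.S t s '' D ⊆ B₀ t)
    (hcontr : ∀ t : ℝ, ∀ ε > 0, ∃ sε < t, ∃ ψ : X → X → ℝ,
      IsContractiveOn ψ (B₀ sε) ∧
      ∀ x ∈ B₀ sε, ∀ y ∈ B₀ sε,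
        ‖P.S t sε x - P.S t sε y‖ ≤ ε + ψ x y) :
    PullbackAsympCompact P := by
  intro t s x hst hs hx
  set y : ℕ → X := fun k => P.S t (s k) (x k) with hy
  have key : ∀ ε : ℝ, 0 < ε → ∀ σ : ℕ → ℕ, StrictMono σ →
      ∃ φ : ℕ → ℕ, StrictMono φ ∧ ∀ k l, ‖y (σ (φ k)) - y (σ (φ l))‖ ≤ ε := by
    intro ε hε σ hσ
    obtain ⟨sε, hsεt, ψ, hψc, hψb⟩ := hcontr t (ε/6) (by linarith)
    obtain ⟨s₀, hs₀, habs'⟩ := habs sε (Set.range x) hx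
    have hσs : Tendsto (fun k => s (σ k)) atTop atBot := hs.comp hσ.tendsto_atTop
    obtain ⟨K, hK⟩ := eventually_atTop.1 (hσs.eventually (eventually_le_atBot s₀))
    set z : ℕ → X := fun k => P.S sε (s (σ (k+K))) (x (σ (k+K))) with hzdef
    have hz : ∀ k, z k ∈ B₀ sε := fun k =>
      habs' (s (σ (k+K))) (hK (k+K) (Nat.le_add_left K k)) ⟨x (σ (k+K)), ⟨_, rfl⟩, rfl⟩
    have hcomp : ∀ k, y (σ (k+K)) = P.S t sε (z k) := fun k =>
      P.comp t sε (s (σ (k+K))) ((hK (k+K) (Nat.le_add_left K k)).trans hs₀) hsεt.le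
        (x (σ (k+K)))
    obtain ⟨φ', hφ', L, hLlim, hL0⟩ := hψc z hz
    obtain ⟨K₂, hK₂⟩ := eventually_atTop.1
      (hL0.eventually (eventually_le_nhds (by linarith : (0:ℝ) < ε/6)))
    refine ⟨fun k => φ' (k + K₂) + K, ?_, ?_⟩
    · intro a b hab
      exact Nat.add_lt_add_right (hφ' (Nat.add_lt_add_right hab K₂)) K
    · intro k l
      set a := k + K₂ with hadef
      set b := l + K₂ with hbdef
      have ha : ∀ᶠ l' in atTop, ψ (z (φ' a)) (z (φ' l')) ≤ L a + ε/6 :=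
        (hLlim a).eventually (eventually_le_nhds (by linarith))
      have hb' : ∀ᶠ l' in atTop, ψ (z (φ' b)) (z (φ' l')) ≤ L b + ε/6 :=
        (hLlim b).eventually (eventually_le_nhds (by linarith))
      obtain ⟨l', hl'a, hl'b⟩ := (ha.and hb').exists
      have e1 : ‖P.S t sε (z (φ' a)) - P.S t sε (z (φ' l'))‖ ≤ ε/6 + ψ (z (φ' a)) (z (φ' l')) :=
        hψb _ (hz _) _ (hz _)
      have e2 : ‖P.S t sε (z (φ' b)) - P.S t sε (z (φ' l'))‖ ≤ ε/6 + ψ (z (φ' b)) (z (φ' l')) :=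
        hψb _ (hz _) _ (hz _)
      have hLa : L a ≤ ε/6 := hK₂ a (Nat.le_add_left K₂ k)
      have hLb : L b ≤ ε/6 := hK₂ b (Nat.le_add_left K₂ l)
      calc ‖y (σ (φ' a + K)) - y (σ (φ' b + K))‖
          = ‖P.S t sε (z (φ' a)) - P.S t sε (z (φ' b))‖ := by
            rw [hcomp (φ' a), hcomp (φ' b)]
        _ ≤ ‖P.S t sε (z (φ' a)) - P.S t sε (z (φ' l'))‖
            + ‖P.S t sε (z (φ' l')) - P.S t sε (z (φ' b))‖ :=
            norm_sub_le_norm_sub_add_norm_sub _ _ _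
        _ ≤ (ε/6 + ψ (z (φ' a)) (z (φ' l'))) + (ε/6 + ψ (z (φ' b)) (z (φ' l'))) := by
            rw [norm_sub_rev (P.S t sε (z (φ' l')))]
            exact add_le_add e1 e2
        _ ≤ ε := by linarith
  obtain ⟨φ, hφ, hC⟩ := exists_cauchy_subseq y key
  obtain ⟨yl, hyl⟩ := cauchySeq_tendsto_of_complete hC
  exact ⟨yl, φ, hφ, hyl⟩
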